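/- arXiv:1704.04359 — 8 statements merged into one kernel-verified Lean document; each statement's English description precedes it below -/
import Mathlib

section
/- Let A ⊂ ℂ be finite, C = max_{a∈A}|a|, ε = min(min_{a≠b∈A}|a−b|, min_{0≠a∈A}|a|), and let β ≥ 2C/ε + 1 be a real number. If c₁,…,c_t ∈ A, a₁,…,a_s ∈ A with strictly increasing natural-number exponents d₁ < ⋯ < d_t and k₁ < ⋯ < k_s satisfy Σᵢ cᵢ β^{dᵢ} = Σⱼ aⱼ β^{kⱼ}, and c_t ≠ 0, a_s ≠ 0, then d_t = k_s and c_t = a_s. -/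
/-!
The gap `ε` between distinct digits (and between nonzero digits and `0`) makes a
surviving leading term have size at least `ε β^D`, while each lower-order sum is at most
`C (β^D - 1)/(β - 1)`; the choice `β ≥ 2C/ε + 1` makes twice the latter smaller than the former.
-/

open Finset

variable {β C ε : ℝ}

lemma norm_sum_mul_pow_le {ι : Type*} [Fintype ι] (hβ : 0 ≤ β) (hC : 0 ≤ C)
    {c : ι → ℂ} {d : ι → ℕ} {D : ℕ} (hd : Function.Injective d) (hdD : ∀ i, d i < D)
    (hc : ∀ i, ‖c i‖ ≤ C) :
    ‖∑ i, c i * (β : ℂ) ^ d i‖ ≤ C * ∑ m ∈ range D, β ^ m := by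
  classical
  have himage : ∑ i, β ^ d i ≤ ∑ m ∈ range D, β ^ m := by
    rw [← sum_image fun i _ j _ h => hd h]
    exact sum_le_sum_of_subset_of_nonneg
      (fun m hm => by obtain ⟨i, -, rfl⟩ := mem_image.1 hm; exact mem_range.2 (hdD i))
      fun m _ _ => pow_nonneg hβ m
  calc ‖∑ i, c i * (β : ℂ) ^ d i‖
      ≤ ∑ i, ‖c i‖ * β ^ d i := by
        refine (norm_sum_le _ _).trans_eq (sum_congr rfl fun i _ => ?_)
        rw [norm_mul, norm_pow, Complex.norm_real, Real.norm_of_nonneg hβ]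
    _ ≤ ∑ i, C * β ^ d i := sum_le_sum fun i _ => by gcongr; exact hc i
    _ ≤ C * ∑ m ∈ range D, β ^ m := by rw [← mul_sum]; gcongr

lemma norm_lt_of_mul_pow_eq_sub (hβ : 0 < β) (hε : 0 < ε) (hCε : 2 * C ≤ ε * (β - 1))
    {D : ℕ} {x y z : ℂ} (hy : ‖y‖ ≤ C * ∑ m ∈ range D, β ^ m)
    (hz : ‖z‖ ≤ C * ∑ m ∈ range D, β ^ m) (hxyz : x * (β : ℂ) ^ D = y - z) :
    ‖x‖ < ε := by
  have hG : 0 ≤ ∑ m ∈ range D, β ^ m := sum_nonneg fun m _ => pow_nonneg hβ.le m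
  have hβD : 0 < β ^ D := pow_pos hβ D
  have : ‖x‖ * β ^ D ≤ ε * (β ^ D - 1) :=
    calc ‖x‖ * β ^ D = ‖y - z‖ := by
          rw [← hxyz, norm_mul, norm_pow, Complex.norm_real, Real.norm_of_nonneg hβ.le]
      _ ≤ ‖y‖ + ‖z‖ := norm_sub_le y z
      _ ≤ 2 * C * ∑ m ∈ range D, β ^ m := by linarith
      _ ≤ ε * (β - 1) * ∑ m ∈ range D, β ^ m := by gcongr
      _ = ε * (β ^ D - 1) := by rw [mul_assoc, mul_comm (β - 1), geom_sum_mul]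
  nlinarith

section LeadingTerm

variable {t s : ℕ} {c : Fin (t + 1) → ℂ} {a : Fin (s + 1) → ℂ}
  {d : Fin (t + 1) → ℕ} {k : Fin (s + 1) → ℕ}

lemma norm_sum_castSucc_mul_pow_le (hβ : 0 ≤ β) (hC : 0 ≤ C) (hd : StrictMono d)
    (hc : ∀ i, ‖c i‖ ≤ C) :
    ‖∑ i : Fin t, c i.castSucc * (β : ℂ) ^ d i.castSucc‖
      ≤ C * ∑ m ∈ range (d (Fin.last t)), β ^ m :=
  norm_sum_mul_pow_le hβ hC (hd.injective.comp (Fin.castSucc_injective t))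
    (fun i => hd (Fin.castSucc_lt_last i)) fun _ => hc _

lemma norm_last_lt_of_sum_eq_of_lt (hβ : 0 < β) (hε : 0 < ε) (hC : 0 ≤ C)
    (hCε : 2 * C ≤ ε * (β - 1)) (hd : StrictMono d) (hk : StrictMono k)
    (hc : ∀ i, ‖c i‖ ≤ C) (ha : ∀ j, ‖a j‖ ≤ C)
    (hsum : ∑ i, c i * (β : ℂ) ^ d i = ∑ j, a j * (β : ℂ) ^ k j)
    (hlt : k (Fin.last s) < d (Fin.last t)) :
    ‖c (Fin.last t)‖ < ε := by
  refine norm_lt_of_mul_pow_eq_sub hβ hε hCε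
    (norm_sum_mul_pow_le hβ.le hC hk.injective
      (fun j => (hk.monotone (Fin.le_last j)).trans_lt hlt) ha)
    (norm_sum_castSucc_mul_pow_le hβ.le hC hd hc) ?_
  rw [← hsum, Fin.sum_univ_castSucc]
  ring

lemma norm_last_sub_lt_of_sum_eq (hβ : 0 < β) (hε : 0 < ε) (hC : 0 ≤ C)
    (hCε : 2 * C ≤ ε * (β - 1)) (hd : StrictMono d) (hk : StrictMono k)
    (hc : ∀ i, ‖c i‖ ≤ C) (ha : ∀ j, ‖a j‖ ≤ C)
    (hsum : ∑ i, c i * (β : ℂ) ^ d i = ∑ j, a j * (β : ℂ) ^ k j)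
    (hdk : d (Fin.last t) = k (Fin.last s)) :
    ‖c (Fin.last t) - a (Fin.last s)‖ < ε := by
  refine norm_lt_of_mul_pow_eq_sub hβ hε hCε
    (hdk ▸ norm_sum_castSucc_mul_pow_le hβ.le hC hk ha)
    (norm_sum_castSucc_mul_pow_le hβ.le hC hd hc) ?_
  rw [Fin.sum_univ_castSucc, Fin.sum_univ_castSucc (f := fun j => a j * (β : ℂ) ^ k j),
    ← hdk] at hsum
  linear_combination hsum

end LeadingTerm

theorem stmt_1 (A : Finset ℂ) (C ε₁ ε₂ ε : ℝ)
    (hC : IsGreatest ((fun a => ‖a‖) '' (A : Set ℂ)) C)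
    (hε₁ : IsLeast {x : ℝ | ∃ a ∈ A, ∃ b ∈ A, a ≠ b ∧ x = ‖a - b‖} ε₁)
    (hε₂ : IsLeast {x : ℝ | ∃ a ∈ A, a ≠ 0 ∧ x = ‖a‖} ε₂)
    (hε : ε = min ε₁ ε₂)
    (β : ℝ) (hβ : β ≥ 2 * C / ε + 1)
    (t s : ℕ) (c : Fin (t + 1) → ℂ) (a : Fin (s + 1) → ℂ)
    (d : Fin (t + 1) → ℕ) (k : Fin (s + 1) → ℕ)
    (hcA : ∀ i, c i ∈ A) (haA : ∀ j, a j ∈ A)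
    (hd : StrictMono d) (hk : StrictMono k)
    (hsum : ∑ i, c i * (β : ℂ) ^ d i = ∑ j, a j * (β : ℂ) ^ k j)
    (hct : c (Fin.last t) ≠ 0) (has : a (Fin.last s) ≠ 0) :
    d (Fin.last t) = k (Fin.last s) ∧ c (Fin.last t) = a (Fin.last s) := by
  have hbound : ∀ z ∈ A, ‖z‖ ≤ C := fun z hz => hC.2 ⟨z, hz, rfl⟩
  have hsep : ∀ z ∈ A, ∀ w ∈ A, z ≠ w → ε ≤ ‖z - w‖ := fun z hz w hw hzw =>
    hε ▸ (min_le_left _ _).trans (hε₁.2 ⟨z, hz, w, hw, hzw, rfl⟩)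
  have hgap : ∀ z ∈ A, z ≠ 0 → ε ≤ ‖z‖ := fun z hz hz0 =>
    hε ▸ (min_le_right _ _).trans (hε₂.2 ⟨z, hz, hz0, rfl⟩)
  have hεpos : 0 < ε := by
    obtain ⟨z, -, w, -, hzw, rfl⟩ := hε₁.1
    obtain ⟨v, -, hv, rfl⟩ := hε₂.1
    exact hε ▸ lt_min (norm_pos_iff.2 (sub_ne_zero.2 hzw)) (norm_pos_iff.2 hv)
  have hCpos : 0 ≤ C := (norm_nonneg _).trans (hbound _ (hcA 0))
  have hCε : 2 * C ≤ ε * (β - 1) := by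
    rw [mul_comm ε, ← div_le_iff₀ hεpos]; linarith
  have hβpos : 0 < β := by linarith [div_nonneg (by linarith : 0 ≤ 2 * C) hεpos.le]
  have hc : ∀ i, ‖c i‖ ≤ C := fun i => hbound _ (hcA i)
  have ha : ∀ j, ‖a j‖ ≤ C := fun j => hbound _ (haA j)
  have hdk : d (Fin.last t) = k (Fin.last s) := le_antisymm
    (not_lt.1 fun h => (norm_last_lt_of_sum_eq_of_lt hβpos hεpos hCpos hCε hd hk hc ha
      hsum h).not_ge (hgap _ (hcA _) hct))
    (not_lt.1 fun h => (norm_last_lt_of_sum_eq_of_lt hβpos hεpos hCpos hCε hk hd ha hc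
      hsum.symm h).not_ge (hgap _ (haA _) has))
  refine ⟨hdk, by_contra fun hne => ?_⟩
  exact (norm_last_sub_lt_of_sum_eq hβpos hεpos hCpos hCε hd hk hc ha hsum hdk).not_ge
    (hsep _ (hcA _) _ (haA _) hne)
end

section
/- Let A ⊂ ℂ be finite, C = max_{a∈A}|a|, ε = min(min_{a≠b∈A}|a−b|, min_{0≠a∈A}|a|), β ≥ 2C/ε + 1. Then any value f(β), where f(x) = Σᵢ cᵢ x^{dᵢ} with cᵢ ∈ A nonzero and d₁ < ⋯ < d_t, uniquely determines the polynomial f: if two such polynomials with all nonzero coefficients in A agree at β, they are equal. -/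
/-!
If `f(β) = g(β)`, then `β` is a root of `f - g`. Every coefficient of `f - g` is a difference of
two elements of `A ∪ {0}`, so it has norm at most `2C`, and its leading coefficient is a difference
of two distinct such elements, so it has norm at least `ε`. Cauchy's bound then puts every root of
`f - g ≠ 0` strictly inside the disc of radius `2C/ε + 1 ≤ β`. Hence `f = g`, and a polynomial
determines its exponents and nonzero coefficients once the exponents are listed in increasing order.
-/

open Polynomial

namespace Polynomial

section CauchyBound

variable {K : Type*} [NormedDivisionRing K]

lemma cauchyBound_le_div_add_one {p : K[X]} {ε M : ℝ} (hε : 0 < ε)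
    (hlead : ε ≤ ‖p.leadingCoeff‖) (hM : ∀ n, ‖p.coeff n‖ ≤ M) :
    (cauchyBound p : ℝ) ≤ M / ε + 1 := by
  have hM0 : 0 ≤ M := (norm_nonneg _).trans (hM 0)
  have hsup : (Finset.range p.natDegree).sup (‖p.coeff ·‖₊) ≤ ⟨M, hM0⟩ :=
    Finset.sup_le fun n _ => hM n
  rw [cauchyBound, NNReal.coe_add, NNReal.coe_div, NNReal.coe_one, coe_nnnorm,
    add_le_add_iff_right]
  exact div_le_div₀ hM0 (NNReal.coe_le_coe.mpr hsup) hε hlead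

lemma eval_ne_zero_of_norm_coeff_le {p : K[X]} (hp : p ≠ 0) {ε M : ℝ} (hε : 0 < ε)
    (hlead : ε ≤ ‖p.leadingCoeff‖) (hM : ∀ n, ‖p.coeff n‖ ≤ M) {z : K}
    (hz : M / ε + 1 ≤ ‖z‖) : p.eval z ≠ 0 := fun hroot =>
  ((NNReal.coe_lt_coe.mpr (IsRoot.norm_lt_cauchyBound hp hroot)).trans_le
    (cauchyBound_le_div_add_one hε hlead hM)).not_ge hz

lemma eq_of_eval_eq_of_coeff_mem {S : Set K} {C ε : ℝ} (hε : 0 < ε)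
    (hS_le : ∀ x ∈ S, ‖x‖ ≤ C) (hS_sep : ∀ x ∈ S, ∀ y ∈ S, x ≠ y → ε ≤ ‖x - y‖)
    {p q : K[X]} (hp : ∀ n, p.coeff n ∈ S) (hq : ∀ n, q.coeff n ∈ S) {z : K}
    (hz : 2 * C / ε + 1 ≤ ‖z‖) (heval : p.eval z = q.eval z) : p = q := by
  by_contra hne
  have hpq : p - q ≠ 0 := sub_ne_zero.mpr hne
  have hlead : ε ≤ ‖(p - q).leadingCoeff‖ := by
    have hcoeff : (p - q).leadingCoeff = p.coeff (p - q).natDegree - q.coeff (p - q).natDegree :=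
      coeff_sub ..
    rw [hcoeff]
    refine hS_sep _ (hp _) _ (hq _) fun h => hpq ?_
    rw [← leadingCoeff_eq_zero, hcoeff, h, sub_self]
  have hM : ∀ n, ‖(p - q).coeff n‖ ≤ 2 * C := fun n => by
    rw [coeff_sub, two_mul]
    exact (norm_sub_le _ _).trans (add_le_add (hS_le _ (hp n)) (hS_le _ (hq n)))
  exact eval_ne_zero_of_norm_coeff_le hpq hε hlead hM hz (by rw [eval_sub, heval, sub_self])

end CauchyBound

section Sparse

variable {R : Type*} [Semiring R] {ι : Type*} [Fintype ι]

noncomputable def sparsePoly (c : ι → R) (d : ι → ℕ) : R[X] :=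
  ∑ i, C (c i) * X ^ d i

variable {c : ι → R} {d : ι → ℕ}

lemma eval_sparsePoly (x : R) : (sparsePoly c d).eval x = ∑ i, c i * x ^ d i := by
  simp [sparsePoly, eval_finsetSum]

lemma coeff_sparsePoly_apply (hd : Function.Injective d) (i : ι) :
    (sparsePoly c d).coeff (d i) = c i := by
  rw [sparsePoly, finsetSum_coeff, Finset.sum_eq_single i]
  · simp
  · intro j _ hji
    rw [coeff_C_mul_X_pow, if_neg fun h => hji (hd h).symm]
  · simp

lemma coeff_sparsePoly_of_notMem_range {n : ℕ} (hn : n ∉ Set.range d) :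
    (sparsePoly c d).coeff n = 0 := by
  rw [sparsePoly, finsetSum_coeff]
  refine Finset.sum_eq_zero fun i _ => ?_
  rw [coeff_C_mul_X_pow, if_neg fun h => hn ⟨i, h.symm⟩]

lemma coeff_sparsePoly_mem {S : Set R} (hd : Function.Injective d) (h0 : (0 : R) ∈ S)
    (hc : ∀ i, c i ∈ S) (n : ℕ) : (sparsePoly c d).coeff n ∈ S := by
  by_cases hn : n ∈ Set.range d
  · obtain ⟨i, rfl⟩ := hn
    rw [coeff_sparsePoly_apply hd]
    exact hc i
  · rw [coeff_sparsePoly_of_notMem_range hn]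
    exact h0

lemma coeff_sparsePoly_ne_zero_iff (hd : Function.Injective d) (hc : ∀ i, c i ≠ 0) (n : ℕ) :
    (sparsePoly c d).coeff n ≠ 0 ↔ n ∈ Set.range d := by
  refine ⟨fun h => not_not.mp fun hn => h (coeff_sparsePoly_of_notMem_range hn), ?_⟩
  rintro ⟨i, rfl⟩
  rw [coeff_sparsePoly_apply hd]
  exact hc i

lemma exists_cast_eq_of_sparsePoly_eq {t s : ℕ} {c : Fin t → R} {a : Fin s → R}
    {d : Fin t → ℕ} {k : Fin s → ℕ} (hd : StrictMono d) (hk : StrictMono k)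
    (hc : ∀ i, c i ≠ 0) (ha : ∀ j, a j ≠ 0) (h : sparsePoly c d = sparsePoly a k) :
    ∃ h : t = s, ∀ i : Fin t, d i = k (Fin.cast h i) ∧ c i = a (Fin.cast h i) := by
  have hrange : Set.range d = Set.range k := Set.ext fun n => by
    rw [← coeff_sparsePoly_ne_zero_iff hd.injective hc,
      ← coeff_sparsePoly_ne_zero_iff hk.injective ha, h]
  have hts : t = s := by
    rw [← Nat.card_fin t, ← Nat.card_fin s, ← Set.ncard_range_of_injective hd.injective, hrange,
      Set.ncard_range_of_injective hk.injective]
  subst hts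
  obtain rfl : d = k := (hd.range_inj hk).mp hrange
  refine ⟨rfl, fun i => ⟨rfl, ?_⟩⟩
  rw [Fin.cast_eq_self, ← coeff_sparsePoly_apply (c := c) hd.injective, h,
    coeff_sparsePoly_apply hd.injective]

end Sparse

end Polynomial

section Separation

variable {E : Type*} [NormedAddCommGroup E] {A : Finset E} {ε₁ ε₂ : ℝ}

lemma pos_of_isLeast_norm_sub (hε₁ : IsLeast {x : ℝ | ∃ a ∈ A, ∃ b ∈ A, a ≠ b ∧ x = ‖a - b‖} ε₁) :
    0 < ε₁ := by
  obtain ⟨a, -, b, -, hab, rfl⟩ := hε₁.1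
  exact norm_pos_iff.mpr (sub_ne_zero.mpr hab)

lemma pos_of_isLeast_norm (hε₂ : IsLeast {x : ℝ | ∃ a ∈ A, a ≠ 0 ∧ x = ‖a‖} ε₂) : 0 < ε₂ := by
  obtain ⟨a, -, ha, rfl⟩ := hε₂.1
  exact norm_pos_iff.mpr ha

lemma min_le_norm_sub_of_mem_insert_zero
    (hε₁ : IsLeast {x : ℝ | ∃ a ∈ A, ∃ b ∈ A, a ≠ b ∧ x = ‖a - b‖} ε₁)
    (hε₂ : IsLeast {x : ℝ | ∃ a ∈ A, a ≠ 0 ∧ x = ‖a‖} ε₂) {x y : E}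
    (hx : x ∈ insert 0 (A : Set E)) (hy : y ∈ insert 0 (A : Set E)) (hxy : x ≠ y) :
    min ε₁ ε₂ ≤ ‖x - y‖ := by
  rcases hx with rfl | hx <;> rcases hy with rfl | hy
  · exact absurd rfl hxy
  · rw [zero_sub, norm_neg]
    exact (min_le_right _ _).trans (hε₂.2 ⟨y, hy, hxy.symm, rfl⟩)
  · rw [sub_zero]
    exact (min_le_right _ _).trans (hε₂.2 ⟨x, hx, hxy, rfl⟩)
  · exact (min_le_left _ _).trans (hε₁.2 ⟨x, hx, y, hy, hxy, rfl⟩)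

end Separation

theorem stmt_2 (A : Finset ℂ) (C ε₁ ε₂ ε : ℝ)
    (hC : IsGreatest ((fun a : ℂ => ‖a‖) '' (A : Set ℂ)) C)
    (hε₁ : IsLeast {x : ℝ | ∃ a ∈ A, ∃ b ∈ A, a ≠ b ∧ x = ‖a - b‖} ε₁)
    (hε₂ : IsLeast {x : ℝ | ∃ a ∈ A, a ≠ 0 ∧ x = ‖a‖} ε₂)
    (hε : ε = min ε₁ ε₂)
    (β : ℝ) (hβ : β ≥ 2 * C / ε + 1)
    (t s : ℕ) (c : Fin t → ℂ) (a : Fin s → ℂ)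
    (d : Fin t → ℕ) (k : Fin s → ℕ)
    (hcA : ∀ i, c i ∈ A) (haA : ∀ j, a j ∈ A)
    (hc0 : ∀ i, c i ≠ 0) (ha0 : ∀ j, a j ≠ 0)
    (hd : StrictMono d) (hk : StrictMono k)
    (hsum : ∑ i, c i * (β : ℂ) ^ d i = ∑ j, a j * (β : ℂ) ^ k j) :
    ∃ h : t = s, ∀ i : Fin t, d i = k (Fin.cast h i) ∧ c i = a (Fin.cast h i) := by
  subst hε
  set S : Set ℂ := insert 0 (A : Set ℂ)
  have hC0 : 0 ≤ C := by
    obtain ⟨x, -, rfl⟩ := hC.1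
    exact norm_nonneg x
  have hS_le : ∀ x ∈ S, ‖x‖ ≤ C := by
    rintro x (rfl | hx)
    · simpa using hC0
    · exact hC.2 ⟨x, hx, rfl⟩
  have hz : 2 * C / min ε₁ ε₂ + 1 ≤ ‖(β : ℂ)‖ := hβ.trans (by simpa using le_abs_self β)
  have hfg : sparsePoly c d = sparsePoly a k :=
    eq_of_eval_eq_of_coeff_mem (lt_min (pos_of_isLeast_norm_sub hε₁) (pos_of_isLeast_norm hε₂))
      hS_le (fun x hx y hy => min_le_norm_sub_of_mem_insert_zero hε₁ hε₂ hx hy)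
      (coeff_sparsePoly_mem hd.injective (Set.mem_insert 0 _) fun i => Or.inr (hcA i))
      (coeff_sparsePoly_mem hk.injective (Set.mem_insert 0 _) fun j => Or.inr (haA j))
      hz (by simpa only [eval_sparsePoly] using hsum)
  exact exists_cast_eq_of_sparsePoly_eq hd hk hc0 ha0 hfg
end

section
/- Let f(x) = c₁x^{d₁} + ⋯ + c_t x^{d_t} with d₁ < ⋯ < d_t natural numbers and coefficients cᵢ in a finite set A ⊂ ℂ with c_t ≠ 0. Let C = max_{a∈A}|a|, ε = min(min_{a≠b∈A}|a−b|, min_{0≠a∈A}|a|), and β ≥ 2C/ε + 1. Then for every natural number k: if k ≤ d_t then |f(β)/β^k| > ε/2, and if k > d_t then |f(β)/β^k| < ε/2. -/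
/-!
Write `S = ∑ cᵢ zᵈⁱ` with `r = ‖z‖` and `D` the top exponent. Since every coefficient has norm
at most `C ≤ (r - 1) ε/2`, any sum of terms with distinct exponents below `N` has norm at most
`C (r^N - 1)/(r - 1) ≤ ε/2 (r^N - 1)`. Applied to all of `S` this gives `‖S‖ < ε/2 · r^(D+1)`;
applied to the lower terms, together with `‖c_t‖ ≥ ε`, it gives `‖S‖ > ε/2 · r^D`. So, exactly as
for base-`r` digits, `‖S / z^k‖` exceeds `ε/2` precisely when `k ≤ D`.
-/

open Finset

theorem Finset.sum_pow_le_sum_range_pow {ι : Type*} {r : ℝ} (hr : 0 ≤ r) {s : Finset ι}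
    {e : ι → ℕ} (he : Set.InjOn e s) {N : ℕ} (heN : ∀ i ∈ s, e i < N) :
    ∑ i ∈ s, r ^ e i ≤ ∑ j ∈ range N, r ^ j := by
  rw [← sum_image he]
  refine sum_le_sum_of_subset_of_nonneg ?_ fun _ _ _ => by positivity
  simpa [subset_iff] using heN

section SparseSum

variable {ι 𝕜 : Type*} [NormedDivisionRing 𝕜] {z : 𝕜} {C δ : ℝ}

theorem norm_sum_mul_pow_le_s3 {s : Finset ι} {c : ι → 𝕜} {e : ι → ℕ} {N : ℕ}
    (hc : ∀ i ∈ s, ‖c i‖ ≤ C) (hC : 0 ≤ C) (hCδ : C ≤ (‖z‖ - 1) * δ) (hz : 1 < ‖z‖)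
    (he : Set.InjOn e s) (heN : ∀ i ∈ s, e i < N) :
    ‖∑ i ∈ s, c i * z ^ e i‖ ≤ δ * (‖z‖ ^ N - 1) := by
  have hz1 : 0 < ‖z‖ - 1 := by linarith
  calc ‖∑ i ∈ s, c i * z ^ e i‖
      ≤ ∑ i ∈ s, C * ‖z‖ ^ e i := by
        refine (norm_sum_le _ _).trans (sum_le_sum fun i hi => ?_)
        rw [norm_mul, norm_pow]
        gcongr
        exact hc i hi
    _ ≤ C * ∑ j ∈ range N, ‖z‖ ^ j := by
        rw [← mul_sum]
        gcongr
        exact sum_pow_le_sum_range_pow (norm_nonneg z) he heN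
    _ = C / (‖z‖ - 1) * (‖z‖ ^ N - 1) := by
        rw [geom_sum_eq hz.ne']
        ring
    _ ≤ δ * (‖z‖ ^ N - 1) := by
        gcongr
        · exact sub_nonneg.2 (one_le_pow₀ hz.le)
        · rwa [div_le_iff₀' hz1]

variable {t : ℕ} {c : Fin (t + 1) → 𝕜} {d : Fin (t + 1) → ℕ}
  (hc : ∀ i, ‖c i‖ ≤ C) (hC : 0 ≤ C) (hCδ : C ≤ (‖z‖ - 1) * δ) (hz : 1 < ‖z‖)
  (hd : StrictMono d) (hδ : 0 < δ)
include hc hC hCδ hz hd hδ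

theorem lt_norm_sum_mul_pow (hlast : 2 * δ ≤ ‖c (Fin.last t)‖) :
    δ * ‖z‖ ^ d (Fin.last t) < ‖∑ i, c i * z ^ d i‖ := by
  have hlow : ‖∑ i : Fin t, c i.castSucc * z ^ d i.castSucc‖ ≤ δ * (‖z‖ ^ d (Fin.last t) - 1) :=
    norm_sum_mul_pow_le_s3 (fun i _ => hc _) hC hCδ hz
      (fun i _ j _ h => Fin.castSucc_injective t (hd.injective h))
      (fun i _ => hd (Fin.castSucc_lt_last i))
  have htop : 2 * δ * ‖z‖ ^ d (Fin.last t) ≤ ‖c (Fin.last t) * z ^ d (Fin.last t)‖ := by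
    rw [norm_mul, norm_pow]
    gcongr
  have htri := norm_sub_le_norm_add (c (Fin.last t) * z ^ d (Fin.last t))
    (∑ i : Fin t, c i.castSucc * z ^ d i.castSucc)
  rw [Fin.sum_univ_castSucc, add_comm]
  linarith

theorem norm_sum_mul_pow_lt :
    ‖∑ i, c i * z ^ d i‖ < δ * ‖z‖ ^ (d (Fin.last t) + 1) := by
  have := norm_sum_mul_pow_le_s3 (s := univ) (N := d (Fin.last t) + 1) (fun i _ => hc i) hC hCδ hz
    hd.injective.injOn (fun i _ => Nat.lt_succ_of_le (hd.monotone (Fin.le_last i)))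
  linarith

theorem lt_norm_sum_mul_pow_div_pow (hlast : 2 * δ ≤ ‖c (Fin.last t)‖) {k : ℕ}
    (hk : k ≤ d (Fin.last t)) : δ < ‖(∑ i, c i * z ^ d i) / z ^ k‖ := by
  rw [norm_div, norm_pow, lt_div_iff₀ (by positivity)]
  calc δ * ‖z‖ ^ k ≤ δ * ‖z‖ ^ d (Fin.last t) := by gcongr; exact hz.le
    _ < _ := lt_norm_sum_mul_pow hc hC hCδ hz hd hδ hlast

theorem norm_sum_mul_pow_div_pow_lt {k : ℕ} (hk : d (Fin.last t) < k) :
    ‖(∑ i, c i * z ^ d i) / z ^ k‖ < δ := by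
  rw [norm_div, norm_pow, div_lt_iff₀ (by positivity)]
  calc _ < δ * ‖z‖ ^ (d (Fin.last t) + 1) := norm_sum_mul_pow_lt hc hC hCδ hz hd hδ
    _ ≤ δ * ‖z‖ ^ k := by gcongr; exacts [hz.le, hk]

end SparseSum

theorem stmt_3 (A : Finset ℂ) (C ε₁ ε₂ ε : ℝ)
    (hC : IsGreatest ((fun a => ‖a‖) '' (A : Set ℂ)) C)
    (hε₁ : IsLeast {x : ℝ | ∃ a ∈ A, ∃ b ∈ A, a ≠ b ∧ x = ‖a - b‖} ε₁)
    (hε₂ : IsLeast {x : ℝ | ∃ a ∈ A, a ≠ 0 ∧ x = ‖a‖} ε₂)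
    (hε : ε = min ε₁ ε₂)
    (β : ℝ) (hβ : β ≥ 2 * C / ε + 1)
    (t : ℕ) (c : Fin (t + 1) → ℂ) (d : Fin (t + 1) → ℕ)
    (hcA : ∀ i, c i ∈ A) (hd : StrictMono d)
    (hct : c (Fin.last t) ≠ 0) :
    ∀ k : ℕ,
      (k ≤ d (Fin.last t) →
        ‖(∑ i, c i * (β : ℂ) ^ d i) / (β : ℂ) ^ k‖ > ε / 2) ∧
      (k > d (Fin.last t) →
        ‖(∑ i, c i * (β : ℂ) ^ d i) / (β : ℂ) ^ k‖ < ε / 2) := by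
  have hε₁pos : 0 < ε₁ := by
    obtain ⟨a, -, b, -, hab, rfl⟩ := hε₁.1
    exact norm_pos_iff.2 (sub_ne_zero.2 hab)
  have hε₂pos : 0 < ε₂ := by
    obtain ⟨a, -, ha, rfl⟩ := hε₂.1
    exact norm_pos_iff.2 ha
  have hεpos : 0 < ε := hε ▸ lt_min hε₁pos hε₂pos
  have hc : ∀ i, ‖c i‖ ≤ C := fun i => hC.2 ⟨c i, hcA i, rfl⟩
  have hεlast : ε ≤ ‖c (Fin.last t)‖ :=
    hε ▸ (min_le_right _ _).trans (hε₂.2 ⟨_, hcA _, hct, rfl⟩)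
  have hCpos : 0 < C := hεpos.trans_le (hεlast.trans (hc _))
  have hCβ : 2 * C ≤ (β - 1) * ε := (div_le_iff₀ hεpos).1 (by linarith)
  have hβ1 : 1 < β := by linarith [div_pos (mul_pos two_pos hCpos) hεpos]
  have hnorm : ‖(β : ℂ)‖ = β := by rw [Complex.norm_real, Real.norm_of_nonneg (by linarith)]
  have hCδ : C ≤ (‖(β : ℂ)‖ - 1) * (ε / 2) := by rw [hnorm]; linarith
  have hz : 1 < ‖(β : ℂ)‖ := by rwa [hnorm]
  intro k
  exact ⟨lt_norm_sum_mul_pow_div_pow hc hCpos.le hCδ hz hd (half_pos hεpos) (by linarith),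
    norm_sum_mul_pow_div_pow_lt hc hCpos.le hCδ hz hd (half_pos hεpos)⟩
end

section
/- Under the same hypotheses (f with leading degree d_t, coefficients in finite A ⊂ ℂ with nonzero leading coefficient, and β ≥ 2C/ε + 1), the leading degree satisfies d_t = ⌊log_β(2|f(β)|/ε)⌋. -/
/-!
Write `f(β) = R + c_t β^{d_t}`. Since the exponents of `R` are distinct and below `d_t`, the
geometric sum gives `(β - 1)‖R‖ ≤ C (β^{d_t} - 1)`, and `2C ≤ ε (β - 1)` turns this into
`‖R‖ < ε β^{d_t} / 2`. As `ε ≤ ‖c_t‖ ≤ C`, the leading term then pins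
`ε β^{d_t} / 2 ≤ ‖f(β)‖ < ε β^{d_t + 1} / 2`, which is the claim after taking `logb β`.
-/

open Finset

theorem Real.floor_logb_eq_of_mem_Ico {b x : ℝ} {n : ℕ} (hb : 1 < b)
    (hx : x ∈ Set.Ico (b ^ n) (b ^ (n + 1))) : ⌊Real.logb b x⌋ = n := by
  have hx₀ : 0 < x := (pow_pos (by linarith) n).trans_le hx.1
  rw [Int.floor_eq_iff, Real.le_logb_iff_rpow_le hb hx₀, Real.logb_lt_iff_lt_rpow hb hx₀]
  exact_mod_cast hx

theorem norm_sum_mul_pow_mul_sub_one_le {ι : Type*} {s : Finset ι} {c : ι → ℂ} {d : ι → ℕ}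
    {β C : ℝ} {D : ℕ} (hβ : 1 ≤ β) (hC : 0 ≤ C) (hc : ∀ i ∈ s, ‖c i‖ ≤ C)
    (hd : Set.InjOn d s) (hdD : ∀ i ∈ s, d i < D) :
    ‖∑ i ∈ s, c i * (β : ℂ) ^ d i‖ * (β - 1) ≤ C * (β ^ D - 1) := by
  have hβ₀ : 0 ≤ β := by linarith
  have hsum : ∑ i ∈ s, β ^ d i ≤ ∑ j ∈ range D, β ^ j := by
    rw [← sum_image hd]
    refine sum_le_sum_of_subset_of_nonneg ?_ fun j _ _ => by positivity
    intro j hj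
    obtain ⟨i, hi, rfl⟩ := mem_image.mp hj
    exact mem_range.mpr (hdD i hi)
  have hnorm : ‖∑ i ∈ s, c i * (β : ℂ) ^ d i‖ ≤ C * ∑ j ∈ range D, β ^ j :=
    calc ‖∑ i ∈ s, c i * (β : ℂ) ^ d i‖ ≤ ∑ i ∈ s, ‖c i‖ * β ^ d i := by
          refine (norm_sum_le _ _).trans_eq (sum_congr rfl fun i _ => ?_)
          rw [norm_mul, norm_pow, Complex.norm_real, Real.norm_of_nonneg hβ₀]
      _ ≤ ∑ i ∈ s, C * β ^ d i := sum_le_sum fun i hi => by gcongr; exact hc i hi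
      _ ≤ C * ∑ j ∈ range D, β ^ j := by rw [← mul_sum]; gcongr
  calc ‖∑ i ∈ s, c i * (β : ℂ) ^ d i‖ * (β - 1)
      ≤ C * ∑ j ∈ range D, β ^ j * (β - 1) := by
        rw [← sum_mul, ← mul_assoc]; gcongr
    _ = C * (β ^ D - 1) := by rw [← sum_mul, geom_sum_mul]

theorem norm_add_mul_pow_mem_Ico {R a : ℂ} {β C ε : ℝ} {D : ℕ} (hβ : 1 < β) (hε : 0 < ε)
    (hCβ : 2 * C ≤ ε * (β - 1)) (hR : ‖R‖ * (β - 1) ≤ C * (β ^ D - 1))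
    (hεa : ε ≤ ‖a‖) (haC : ‖a‖ ≤ C) :
    ‖R + a * (β : ℂ) ^ D‖ ∈ Set.Ico (ε / 2 * β ^ D) (ε / 2 * β ^ (D + 1)) := by
  have hβD : 1 ≤ β ^ D := one_le_pow₀ hβ.le
  have hlead : ‖a * (β : ℂ) ^ D‖ = ‖a‖ * β ^ D := by
    rw [norm_mul, norm_pow, Complex.norm_real, Real.norm_of_nonneg (by linarith)]
  have hRε : 2 * ‖R‖ ≤ ε * (β ^ D - 1) := by
    have := mul_le_mul_of_nonneg_right hCβ (sub_nonneg.mpr hβD)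
    nlinarith
  have hupper := norm_add_le R (a * (β : ℂ) ^ D)
  have hlower := norm_sub_norm_le (a * (β : ℂ) ^ D) (-R)
  rw [sub_neg_eq_add, add_comm, norm_neg] at hlower
  rw [hlead] at hupper hlower
  constructor
  · nlinarith
  · nlinarith [pow_succ β D]

theorem stmt_4 (A : Finset ℂ) (C ε₁ ε₂ ε : ℝ)
    (hC : IsGreatest ((fun a : ℂ => ‖a‖) '' (A : Set ℂ)) C)
    (hε₁ : IsLeast {x : ℝ | ∃ a ∈ A, ∃ b ∈ A, a ≠ b ∧ x = ‖a - b‖} ε₁)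
    (hε₂ : IsLeast {x : ℝ | ∃ a ∈ A, a ≠ 0 ∧ x = ‖a‖} ε₂)
    (hε : ε = min ε₁ ε₂)
    (β : ℝ) (hβ : β ≥ 2 * C / ε + 1)
    (t : ℕ) (c : Fin (t + 1) → ℂ) (d : Fin (t + 1) → ℕ)
    (hcA : ∀ i, c i ∈ A) (hd : StrictMono d)
    (hct : c (Fin.last t) ≠ 0) :
    (d (Fin.last t) : ℤ) =
      ⌊Real.logb β (2 * ‖∑ i, c i * (β : ℂ) ^ d i‖ / ε)⌋ := by
  obtain ⟨⟨a, -, b, -, hab, rfl⟩, -⟩ := hε₁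
  obtain ⟨⟨a', -, ha', rfl⟩, hε₂_le⟩ := hε₂
  have hε₀ : 0 < ε :=
    hε ▸ lt_min (norm_pos_iff.mpr (sub_ne_zero.mpr hab)) (norm_pos_iff.mpr ha')
  have hc : ∀ i, ‖c i‖ ≤ C := fun i => hC.2 ⟨c i, hcA i, rfl⟩
  have hεct : ε ≤ ‖c (Fin.last t)‖ := hε ▸ min_le_of_right_le (hε₂_le ⟨_, hcA _, hct, rfl⟩)
  have hCβ : 2 * C ≤ ε * (β - 1) := by
    linarith [(div_le_iff₀ hε₀).mp (show 2 * C / ε ≤ β - 1 by linarith)]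
  have hβ₁ : 1 < β := by nlinarith [hεct.trans (hc (Fin.last t))]
  have htail := norm_sum_mul_pow_mul_sub_one_le (s := univ)
    (c := fun i : Fin t => c i.castSucc) (d := fun i => d i.castSucc) (D := d (Fin.last t))
    hβ₁.le ((norm_nonneg _).trans (hc 0)) (fun i _ => hc _)
    (hd.injective.comp (Fin.castSucc_injective t)).injOn fun i _ => hd (Fin.castSucc_lt_last i)
  have hmem := norm_add_mul_pow_mem_Ico hβ₁ hε₀ hCβ htail hεct (hc _)
  rw [Fin.sum_univ_castSucc]
  refine (Real.floor_logb_eq_of_mem_Ico hβ₁ ⟨?_, ?_⟩).symm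
  · rw [le_div_iff₀ hε₀]; linarith [hmem.1]
  · rw [div_lt_iff₀ hε₀]; linarith [hmem.2]
end

section
/- Let r₁ < r₂ be rationals with r₁ > 0, neither an integer, such that the open interval (r₁, r₂) contains no integer. Write r₁ = w + ε₁ and r₂ = w + ε₂ with w = ⌊r₁⌋ and 0 < ε₁ < ε₂ < 1. Then a positive integer d is the smallest positive integer such that (d·r₁, d·r₂) contains an integer if and only if d is the smallest positive integer such that (d·ε₁, d·ε₂) contains an integer; moreover, if d₁ is the smallest positive integer such that (d₁/ε₂, d₁/ε₁) contains an integer, then the smallest such d equals ⌈d₁/ε₂⌉ if d₁/ε₂ ∉ ℤ and d₁/ε₂ + 1 if d₁/ε₂ ∈ ℤ. -/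
/-! Shifting `r₁, r₂` by the integer `w` shifts `(m r₁, m r₂)` by the integer `m w`, so the two
sets in the first claim coincide. For the second, `m ε₁ < z < m ε₂` is the same as
`z / ε₂ < m < z / ε₁`: the roles of the multiplier and the integer are exchanged. Hence if `d₁` is
the least integer `z` admitting such an `m`, the least `m` is the least integer above `d₁ / ε₂`,
namely `⌊d₁ / ε₂⌋ + 1`. -/

section

variable {K : Type*}

theorem exists_intCast_between_sub_intCast_iff [Ring K] [LinearOrder K] [IsStrictOrderedRing K]
    (x y : K) (k : ℤ) :
    (∃ z : ℤ, x - k < z ∧ (z : K) < y - k) ↔ ∃ z : ℤ, x < z ∧ (z : K) < y :=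
  ⟨fun ⟨z, h₁, h₂⟩ => ⟨z + k, mod_cast sub_lt_iff_lt_add.mp h₁, mod_cast lt_sub_iff_add_lt.mp h₂⟩,
    fun ⟨z, h₁, h₂⟩ => ⟨z - k, by push_cast; exact sub_lt_sub_right h₁ _,
      by push_cast; exact sub_lt_sub_right h₂ _⟩⟩

theorem setOf_exists_intCast_between_mul_sub_intCast [Ring K] [LinearOrder K]
    [IsStrictOrderedRing K] (w : ℤ) (a b : K) :
    {m : ℕ | 0 < m ∧ ∃ z : ℤ, (m : K) * (a - w) < z ∧ (z : K) < m * (b - w)} =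
      {m : ℕ | 0 < m ∧ ∃ z : ℤ, (m : K) * a < z ∧ (z : K) < m * b} := by
  ext m
  simp only [Set.mem_ofPred_eq, mul_sub]
  exact and_congr_right fun _ => mod_cast exists_intCast_between_sub_intCast_iff _ _ (m * w)

variable [Field K] [LinearOrder K] [IsStrictOrderedRing K] [FloorRing K]

theorem isLeast_setOf_exists_intCast_between_mul {a b : K} (ha : 0 < a) (hb : 0 < b) {d₁ : ℕ}
    (hd₁ : IsLeast {n : ℕ | 0 < n ∧ ∃ z : ℤ, (n : K) / b < z ∧ (z : K) < n / a} d₁) :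
    IsLeast {m : ℕ | 0 < m ∧ ∃ z : ℤ, (m : K) * a < z ∧ (z : K) < m * b}
      (⌊(d₁ : K) / b⌋₊ + 1) := by
  set q : K := d₁ / b
  have hq : 0 ≤ q := by positivity
  refine ⟨⟨Nat.succ_pos _, d₁, ?_, ?_⟩, ?_⟩
  · obtain ⟨-, z₀, hqz₀, hz₀⟩ := hd₁.1
    have hfloor : ((⌊q⌋₊ : ℤ) : K) < z₀ := lt_of_le_of_lt (mod_cast Nat.floor_le hq) hqz₀
    have hle : ((⌊q⌋₊ + 1 : ℕ) : K) ≤ z₀ := mod_cast Int.add_one_le_of_lt (mod_cast hfloor)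
    calc ((⌊q⌋₊ + 1 : ℕ) : K) * a ≤ z₀ * a := by gcongr
      _ < d₁ := (lt_div_iff₀ ha).mp hz₀
      _ = ((d₁ : ℤ) : K) := by norm_cast
  · have := Nat.lt_floor_add_one q
    push_cast at this ⊢
    exact (div_lt_iff₀ hb).mp this
  · rintro m ⟨hm, z, hmz, hzm⟩
    have hz : 0 < z := by
      have : (0 : K) < z := lt_trans (by positivity) hmz
      exact_mod_cast this
    lift z to ℕ using hz.le
    have hd₁z : d₁ ≤ z :=
      hd₁.2 ⟨mod_cast hz, m, by exact_mod_cast (div_lt_iff₀ hb).mpr hzm,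
        by exact_mod_cast (lt_div_iff₀ ha).mpr hmz⟩
    have hqm : q < m := calc
      q ≤ (z : K) / b := div_le_div_of_nonneg_right (mod_cast hd₁z) hb.le
      _ < m := (div_lt_iff₀ hb).mpr (mod_cast hzm)
    exact (Nat.floor_lt hq).mpr hqm

theorem natCast_floor_add_one_eq_ceil {q : K} (hq : 0 ≤ q) (hnq : ¬ ∃ z : ℤ, (z : K) = q) :
    ((⌊q⌋₊ + 1 : ℕ) : K) = ⌈q⌉ := by
  rw [(Int.ceil_eq_floor_add_one_iff_notMem q).mpr hnq]
  push_cast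
  rw [natCast_floor_eq_intCast_floor hq]

end

theorem stmt_6_general (r₁ r₂ : ℚ) (h12 : r₁ < r₂)
    (hn1 : ¬ ∃ z : ℤ, (z : ℚ) = r₁)
    (w : ℤ) (ε₁ ε₂ : ℚ) (hw : w = ⌊r₁⌋) (he1 : ε₁ = r₁ - w) (he2 : ε₂ = r₂ - w) :
    (∀ d : ℕ,
        IsLeast {d : ℕ | 0 < d ∧ ∃ z : ℤ, (d : ℚ) * r₁ < z ∧ (z : ℚ) < d * r₂} d ↔
        IsLeast {d : ℕ | 0 < d ∧ ∃ z : ℤ, (d : ℚ) * ε₁ < z ∧ (z : ℚ) < d * ε₂} d) ∧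
    (∀ d₁ d : ℕ,
      IsLeast {m : ℕ | 0 < m ∧ ∃ z : ℤ, (m : ℚ) / ε₂ < z ∧ (z : ℚ) < m / ε₁} d₁ →
      IsLeast {m : ℕ | 0 < m ∧ ∃ z : ℤ, (m : ℚ) * r₁ < z ∧ (z : ℚ) < m * r₂} d →
      ((¬ ∃ z : ℤ, (z : ℚ) = (d₁ : ℚ) / ε₂) → (d : ℚ) = ⌈(d₁ : ℚ) / ε₂⌉) ∧
      ((∃ z : ℤ, (z : ℚ) = (d₁ : ℚ) / ε₂) → (d : ℚ) = (d₁ : ℚ) / ε₂ + 1)) := by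
  subst he1 he2
  have hε₁ : 0 < r₁ - w := sub_pos.mpr ((hw ▸ Int.floor_le r₁).lt_of_ne fun h => hn1 ⟨w, h⟩)
  have hε₂ : 0 < r₂ - w := by linarith
  rw [← setOf_exists_intCast_between_mul_sub_intCast w r₁ r₂]
  refine ⟨fun d => Iff.rfl, fun d₁ d hd₁ hd => ?_⟩
  have hq : (0 : ℚ) ≤ d₁ / (r₂ - w) := by positivity
  rw [hd.unique (isLeast_setOf_exists_intCast_between_mul hε₁ hε₂ hd₁)]
  refine ⟨natCast_floor_add_one_eq_ceil hq, ?_⟩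
  rintro ⟨z, hz⟩
  rw [← hz] at hq ⊢
  push_cast
  rw [natCast_floor_eq_intCast_floor hq, Int.floor_intCast]

theorem stmt_6 (r₁ r₂ : ℚ) (h0 : 0 < r₁) (h12 : r₁ < r₂)
    (hn1 : ¬ ∃ z : ℤ, (z : ℚ) = r₁) (hn2 : ¬ ∃ z : ℤ, (z : ℚ) = r₂)
    (hnoint : ¬ ∃ z : ℤ, r₁ < (z : ℚ) ∧ (z : ℚ) < r₂)
    (w : ℤ) (ε₁ ε₂ : ℚ) (hw : w = ⌊r₁⌋) (he1 : ε₁ = r₁ - w) (he2 : ε₂ = r₂ - w) :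
    (∀ d : ℕ,
        IsLeast {d : ℕ | 0 < d ∧ ∃ z : ℤ, (d : ℚ) * r₁ < z ∧ (z : ℚ) < d * r₂} d ↔
        IsLeast {d : ℕ | 0 < d ∧ ∃ z : ℤ, (d : ℚ) * ε₁ < z ∧ (z : ℚ) < d * ε₂} d) ∧
    (∀ d₁ d : ℕ,
      IsLeast {m : ℕ | 0 < m ∧ ∃ z : ℤ, (m : ℚ) / ε₂ < z ∧ (z : ℚ) < m / ε₁} d₁ →
      IsLeast {m : ℕ | 0 < m ∧ ∃ z : ℤ, (m : ℚ) * r₁ < z ∧ (z : ℚ) < m * r₂} d →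
      ((¬ ∃ z : ℤ, (z : ℚ) = (d₁ : ℚ) / ε₂) → (d : ℚ) = ⌈(d₁ : ℚ) / ε₂⌉) ∧
      ((∃ z : ℤ, (z : ℚ) = (d₁ : ℚ) / ε₂) → (d : ℚ) = (d₁ : ℚ) / ε₂ + 1)) :=
  stmt_6_general r₁ r₂ h12 hn1 w ε₁ ε₂ hw he1 he2
end

section
/- Let f(x) = Σᵢ cᵢ x^{dᵢ} with nonzero coefficients cᵢ = bᵢ/aᵢ ∈ ℚ where 0 < aᵢ ≤ H and |cᵢ| ≤ C, d₁ < ⋯ < d_t, and let ε = 1/(H(H−1)) and β ≥ 2C/ε + 1. Write c_t = b/a in lowest terms with a > 0. Then a ≤ H, and b is the unique integer in the open interval (a·f(β)/β^{d_t} − aε/2, a·f(β)/β^{d_t} + aε/2); furthermore, if for some a₀ ∈ {1,…,H} the interval (a₀·f(β)/β^{d_t} − a₀ε/2, a₀·f(β)/β^{d_t} + a₀ε/2) contains an integer b₀, then b₀/a₀ = b/a. -/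
/-!
Since the exponents are strictly increasing, the lower-order terms of `f(β)` add up to less than
`C β^{d_t} / (β - 1) ≤ (ε/2) β^{d_t}`, so `x = f(β) / β^{d_t}` lies within `ε/2` of `c_t`.
Two distinct rationals with denominators at most `H` differ by at least `1 / lcm(a, a') ≥ ε`,
and an integer `b₀` in the window of `a₀` makes `b₀ / a₀` another such rational within `ε/2` of `x`,
hence within `ε` of `c_t`; so `b₀ / a₀ = c_t`.
-/

open Finset

theorem Nat.lcm_le_mul_sub_one {H a b : ℕ} (hH : 2 ≤ H) (ha : 0 < a) (hb : 0 < b)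
    (haH : a ≤ H) (hbH : b ≤ H) : a.lcm b ≤ H * (H - 1) := by
  rcases eq_or_ne a b with rfl | hab
  · rw [Nat.lcm_self]
    exact haH.trans (Nat.le_mul_of_pos_right H (by omega))
  · refine (Nat.le_of_dvd (by positivity) (Nat.lcm_dvd_mul a b)).trans ?_
    rcases hab.lt_or_gt with h | h
    · rw [mul_comm H]; exact Nat.mul_le_mul (by omega) hbH
    · exact Nat.mul_le_mul haH (by omega)

namespace Rat

theorem den_intCast_div_natCast_le (b : ℤ) {a : ℕ} (ha : 0 < a) : ((b : ℚ) / a).den ≤ a := by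
  have h := den_dvd b a
  rw [divInt_eq_div, Int.cast_natCast] at h
  exact Nat.le_of_dvd ha (by exact_mod_cast h)

theorem inv_den_le_abs {s : ℚ} (hs : s ≠ 0) : (s.den : ℚ)⁻¹ ≤ |s| := by
  have hnum : (1 : ℚ) ≤ |(s.num : ℚ)| := by
    exact_mod_cast Int.one_le_abs (num_ne_zero.2 hs)
  rw [← mul_den_eq_num, abs_mul, Nat.abs_cast] at hnum
  rw [inv_le_iff_one_le_mul₀' (by positivity)]
  linarith

theorem one_div_le_abs_sub {H : ℕ} (hH : 2 ≤ H) {q r : ℚ} (hq : q.den ≤ H) (hr : r.den ≤ H)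
    (hqr : q ≠ r) : 1 / ((H : ℚ) * (H - 1)) ≤ |q - r| := by
  have hden : (q - r).den ≤ H * (H - 1) :=
    (Nat.le_of_dvd (Nat.lcm_pos q.den_pos r.den_pos) (sub_den_dvd_lcm q r)).trans
      (Nat.lcm_le_mul_sub_one hH q.den_pos r.den_pos hq hr)
  have hcast : ((q - r).den : ℚ) ≤ (H : ℚ) * (H - 1) := by
    rw [← Nat.cast_one (R := ℚ), ← Nat.cast_sub (by omega : 1 ≤ H), ← Nat.cast_mul]
    exact_mod_cast hden
  calc 1 / ((H : ℚ) * (H - 1)) ≤ ((q - r).den : ℚ)⁻¹ := by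
        rw [one_div]; exact inv_anti₀ (by positivity) hcast
    _ ≤ |q - r| := inv_den_le_abs (sub_ne_zero.2 hqr)

end Rat

theorem sum_pow_lt_of_forall_lt {β : ℝ} (hβ : 1 < β) {s : Finset ℕ} {D : ℕ}
    (hs : ∀ k ∈ s, k < D) : ∑ k ∈ s, β ^ k < β ^ D / (β - 1) := by
  calc ∑ k ∈ s, β ^ k ≤ ∑ k ∈ range D, β ^ k :=
        sum_le_sum_of_subset_of_nonneg (fun k hk => mem_range.2 (hs k hk))
          (fun k _ _ => by positivity)
    _ = (β ^ D - 1) / (β - 1) := geom_sum_eq hβ.ne' D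
    _ < β ^ D / (β - 1) := by gcongr; linarith

theorem abs_sum_div_pow_last_sub_lt {t : ℕ} {β C : ℝ} (hβ : 1 < β) (hC : 0 < C)
    {c : Fin (t + 1) → ℝ} (hc : ∀ i, |c i| ≤ C) {d : Fin (t + 1) → ℕ} (hd : StrictMono d) :
    |(∑ i, c i * β ^ d i) / β ^ d (Fin.last t) - c (Fin.last t)| < C / (β - 1) := by
  have hpow : 0 < β ^ d (Fin.last t) := by positivity
  have htail : |∑ i : Fin t, c i.castSucc * β ^ d i.castSucc| ≤
      C * ∑ k ∈ univ.image (fun i : Fin t => d i.castSucc), β ^ k := by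
    rw [sum_image (fun i _ j _ h => Fin.castSucc_injective t (hd.injective h)), mul_sum]
    refine (abs_sum_le_sum_abs _ _).trans (sum_le_sum fun i _ => ?_)
    rw [abs_mul, abs_of_pos (by positivity : (0 : ℝ) < β ^ _)]
    exact mul_le_mul_of_nonneg_right (hc _) (by positivity)
  have hgeom : ∑ k ∈ univ.image (fun i : Fin t => d i.castSucc), β ^ k <
      β ^ d (Fin.last t) / (β - 1) := by
    refine sum_pow_lt_of_forall_lt hβ fun k hk => ?_
    obtain ⟨i, -, rfl⟩ := mem_image.1 hk
    exact hd (Fin.castSucc_lt_last i)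
  rw [Fin.sum_univ_castSucc, add_div, mul_div_cancel_right₀ _ hpow.ne', add_sub_cancel_right,
    abs_div, abs_of_pos hpow, div_lt_iff₀ hpow]
  calc _ ≤ _ := htail
    _ < C * (β ^ d (Fin.last t) / (β - 1)) := mul_lt_mul_of_pos_left hgeom hC
    _ = _ := by ring

section Window

variable {H : ℕ} {ε x : ℝ} {q : ℚ}

theorem num_mem_window (hx : |x - q| < ε / 2) :
    (q.den : ℝ) * x - q.den * (ε / 2) < q.num ∧ (q.num : ℝ) < q.den * x + q.den * (ε / 2) := by
  have hnum : (q.num : ℝ) = q.den * q := by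
    exact_mod_cast ((Rat.mul_den_eq_num q).symm.trans (mul_comm _ _))
  have hden : (0 : ℝ) < q.den := by positivity
  have h1 := mul_lt_mul_of_pos_left (abs_lt.1 hx).1 hden
  have h2 := mul_lt_mul_of_pos_left (abs_lt.1 hx).2 hden
  constructor <;> linarith

theorem div_eq_of_mem_window (hH : 2 ≤ H) (hε : ε = 1 / ((H : ℝ) * (H - 1))) (hq : q.den ≤ H)
    (hx : |x - q| < ε / 2) {a : ℕ} (ha : 0 < a) (haH : a ≤ H) {b : ℤ}
    (hb : a * x - a * (ε / 2) < b ∧ (b : ℝ) < a * x + a * (ε / 2)) : (b : ℚ) / a = q := by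
  by_contra hne
  have hsep : ε ≤ |(b : ℝ) / a - q| := by
    have := Rat.one_div_le_abs_sub hH ((Rat.den_intCast_div_natCast_le b ha).trans haH) hq hne
    rw [hε]; exact_mod_cast this
  have haR : (0 : ℝ) < a := by exact_mod_cast ha
  have hbx : |(b : ℝ) / a - x| < ε / 2 := by
    rw [show (b : ℝ) / a - x = (b - a * x) / a by field_simp, abs_div, Nat.abs_cast,
      div_lt_iff₀ haR, abs_lt]
    constructor <;> linarith
  linarith [abs_sub_le ((b : ℝ) / a) x q]

end Window

theorem stmt_9 (H : ℕ) (hH : 2 ≤ H) (C ε β : ℝ)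
    (hε : ε = 1 / ((H : ℝ) * (H - 1))) (hβ : β ≥ 2 * C / ε + 1)
    (t : ℕ) (c : Fin (t + 1) → ℚ) (d : Fin (t + 1) → ℕ)
    (hc0 : ∀ i, c i ≠ 0) (hden : ∀ i, (c i).den ≤ H) (hbound : ∀ i, |(c i : ℝ)| ≤ C)
    (hd : StrictMono d) :
    -- write c_t = b / a in lowest terms: a = (c (Fin.last t)).den, b = (c (Fin.last t)).num
    ((c (Fin.last t)).den ≤ H) ∧
    (((c (Fin.last t)).den : ℝ) * (∑ i, (c i : ℝ) * β ^ d i) / β ^ d (Fin.last t)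
        - ((c (Fin.last t)).den : ℝ) * ε / 2 < ((c (Fin.last t)).num : ℝ) ∧
      ((c (Fin.last t)).num : ℝ) <
        ((c (Fin.last t)).den : ℝ) * (∑ i, (c i : ℝ) * β ^ d i) / β ^ d (Fin.last t)
          + ((c (Fin.last t)).den : ℝ) * ε / 2) ∧
    (∀ b' : ℤ,
      (((c (Fin.last t)).den : ℝ) * (∑ i, (c i : ℝ) * β ^ d i) / β ^ d (Fin.last t)
          - ((c (Fin.last t)).den : ℝ) * ε / 2 < (b' : ℝ) ∧
        (b' : ℝ) <
          ((c (Fin.last t)).den : ℝ) * (∑ i, (c i : ℝ) * β ^ d i) / β ^ d (Fin.last t)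
            + ((c (Fin.last t)).den : ℝ) * ε / 2) →
      b' = (c (Fin.last t)).num) ∧
    (∀ a₀ : ℕ, 1 ≤ a₀ → a₀ ≤ H → ∀ b₀ : ℤ,
      ((a₀ : ℝ) * (∑ i, (c i : ℝ) * β ^ d i) / β ^ d (Fin.last t)
          - (a₀ : ℝ) * ε / 2 < (b₀ : ℝ) ∧
        (b₀ : ℝ) <
          (a₀ : ℝ) * (∑ i, (c i : ℝ) * β ^ d i) / β ^ d (Fin.last t)
            + (a₀ : ℝ) * ε / 2) →
      (b₀ : ℚ) / (a₀ : ℚ) = c (Fin.last t)) := by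
  simp only [mul_div_assoc]
  set q := c (Fin.last t)
  set x := (∑ i, (c i : ℝ) * β ^ d i) / β ^ d (Fin.last t)
  have hC : 0 < C := (abs_pos.2 (Rat.cast_ne_zero.2 (hc0 (Fin.last t)))).trans_le (hbound _)
  have hε0 : 0 < ε := by
    have : (2 : ℝ) ≤ H := by exact_mod_cast hH
    rw [hε]; exact one_div_pos.2 (by nlinarith)
  have hCε : 2 * C ≤ (β - 1) * ε := by rw [← div_le_iff₀ hε0]; linarith
  have hβ1 : 1 < β := by linarith [div_pos (by linarith : (0 : ℝ) < 2 * C) hε0]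
  have hx : |x - q| < ε / 2 := by
    refine (abs_sum_div_pow_last_sub_lt hβ1 hC hbound hd).trans_le ?_
    rw [div_le_iff₀ (by linarith)]
    linarith
  have hwindow := fun a₀ (ha₀ : 1 ≤ a₀) haH b₀ hb₀ =>
    div_eq_of_mem_window (b := b₀) hH hε (hden _) hx ha₀ haH hb₀
  refine ⟨hden _, num_mem_window hx, fun b' hb' => ?_, hwindow⟩
  have h := hwindow _ q.den_pos (hden _) b' hb'
  rw [div_eq_iff (by positivity), Rat.mul_den_eq_num] at h
  exact_mod_cast h
end

section
/- Let f(x) = (c₁/H₁)x^{d₁} + ⋯ + (c_t/H_t)x^{d_t} where cᵢ ∈ ℤ, Hᵢ ∈ ℤ₊, d₁ < ⋯ < d_t, and |cᵢ/Hᵢ| ≤ C. Let H_max = max Hᵢ. If β ≥ 2C·H_max + 1, then |f(β)·H_t/β^{d_t} − c_t| < 1/2, and hence c_t = ⌈f(β)·H_t/β^{d_t} − 1/2⌉. -/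
/-!
Multiplying f(β) by H_t / β^{d_t} leaves c_t plus an error H_t β^{-d_t} ∑_{i<t} (cᵢ/Hᵢ) β^{dᵢ}.
Since the dᵢ with i < t are distinct exponents below d_t, the sum ∑_{i<t} β^{dᵢ} is dominated by
the geometric sum ∑_{k<d_t} β^k < β^{d_t}/(β - 1), so the error is below C·H_t/(β - 1) ≤ 1/2.
-/

open Finset

section Geometric

variable {R : Type*} [CommRing R] [LinearOrder R] [IsStrictOrderedRing R]

theorem sub_one_mul_sum_pow_lt {β : R} (hβ : 1 ≤ β) {s : Finset ℕ} {n : ℕ}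
    (hs : ∀ k ∈ s, k < n) : (β - 1) * ∑ k ∈ s, β ^ k < β ^ n := by
  have hsub : s ⊆ range n := fun k hk => mem_range.2 (hs k hk)
  calc (β - 1) * ∑ k ∈ s, β ^ k
      ≤ (β - 1) * ∑ k ∈ range n, β ^ k := by gcongr
    _ = β ^ n - 1 := by rw [mul_comm, geom_sum_mul]
    _ < β ^ n := sub_one_lt _

theorem sub_one_mul_sum_pow_castSucc_lt {β : R} (hβ : 1 ≤ β) {t : ℕ} {d : Fin (t + 1) → ℕ}
    (hd : StrictMono d) :
    (β - 1) * ∑ i : Fin t, β ^ d i.castSucc < β ^ d (Fin.last t) := by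
  have hinj : Set.InjOn (fun i : Fin t => d i.castSucc) (univ : Finset (Fin t)) :=
    fun i _ j _ hij => Fin.castSucc_injective t (hd.injective hij)
  rw [← sum_image hinj]
  refine sub_one_mul_sum_pow_lt hβ fun k hk => ?_
  obtain ⟨i, -, rfl⟩ := mem_image.1 hk
  exact hd (Fin.castSucc_lt_last i)

end Geometric

theorem abs_sum_mul_pow_castSucc_lt {t : ℕ} {a : Fin (t + 1) → ℝ} {d : Fin (t + 1) → ℕ}
    (hd : StrictMono d) {C M β : ℝ} (ha : ∀ i, |a i| ≤ C) (hM : 0 ≤ M)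
    (hβ : 2 * C * M + 1 ≤ β) :
    M * |∑ i : Fin t, a i.castSucc * β ^ d i.castSucc| < β ^ d (Fin.last t) / 2 := by
  have hC : 0 ≤ C := (abs_nonneg _).trans (ha (Fin.last t))
  have hβ1 : 1 ≤ β := by nlinarith
  set S := ∑ i : Fin t, β ^ d i.castSucc
  have hS : 0 ≤ S := sum_nonneg fun i _ => by positivity
  have habs : |∑ i : Fin t, a i.castSucc * β ^ d i.castSucc| ≤ C * S := by
    rw [mul_sum]
    refine (abs_sum_le_sum_abs _ _).trans (sum_le_sum fun i _ => ?_)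
    rw [abs_mul, abs_of_nonneg (by positivity : (0 : ℝ) ≤ β ^ d i.castSucc)]
    gcongr
    exact ha _
  have hgeom := sub_one_mul_sum_pow_castSucc_lt hβ1 hd (β := β)
  calc M * |∑ i : Fin t, a i.castSucc * β ^ d i.castSucc|
      ≤ M * (C * S) := by gcongr
    _ ≤ (β - 1) * S / 2 := by nlinarith
    _ < β ^ d (Fin.last t) / 2 := by linarith

theorem sum_mul_pow_mul_div_sub_last {t : ℕ} (a : Fin (t + 1) → ℝ) (d : Fin (t + 1) → ℕ)
    (H : ℝ) {β : ℝ} (hβ : β ≠ 0) :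
    (∑ i, a i * β ^ d i) * H / β ^ d (Fin.last t) - a (Fin.last t) * H
      = H * (∑ i : Fin t, a i.castSucc * β ^ d i.castSucc) / β ^ d (Fin.last t) := by
  rw [Fin.sum_univ_castSucc]
  field_simp
  ring

theorem Int.ceil_sub_half_eq_of_abs_sub_lt {x : ℝ} {n : ℤ} (h : |x - n| < 1 / 2) :
    ⌈x - 1 / 2⌉ = n := by
  rw [abs_sub_lt_iff] at h
  rw [Int.ceil_eq_iff]
  constructor <;> linarith

theorem stmt_10 (t : ℕ) (c : Fin (t + 1) → ℤ) (Hc : Fin (t + 1) → ℕ)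
    (d : Fin (t + 1) → ℕ) (hH : ∀ i, 0 < Hc i) (hd : StrictMono d)
    (C : ℝ) (hbound : ∀ i, |(c i : ℝ) / (Hc i : ℝ)| ≤ C)
    (β : ℝ) (hβ : β ≥ 2 * C * ((Finset.univ.sup Hc : ℕ) : ℝ) + 1) :
    |(∑ i, (c i : ℝ) / (Hc i : ℝ) * β ^ d i) * (Hc (Fin.last t) : ℝ)
        / β ^ d (Fin.last t) - (c (Fin.last t) : ℝ)| < 1 / 2 ∧
    c (Fin.last t) =
      ⌈(∑ i, (c i : ℝ) / (Hc i : ℝ) * β ^ d i) * (Hc (Fin.last t) : ℝ)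
        / β ^ d (Fin.last t) - 1 / 2⌉ := by
  set a : Fin (t + 1) → ℝ := fun i => (c i : ℝ) / (Hc i : ℝ)
  set H : ℝ := (Hc (Fin.last t) : ℝ)
  have hH0 : 0 < H := Nat.cast_pos.2 (hH _)
  have hC : 0 ≤ C := (abs_nonneg _).trans (hbound (Fin.last t))
  have hHmax : H ≤ ((univ.sup Hc : ℕ) : ℝ) := Nat.cast_le.2 (le_sup (mem_univ _))
  have hβH : 2 * C * H + 1 ≤ β := by nlinarith
  have hβ0 : 0 < β := by nlinarith
  have hpow : 0 < β ^ d (Fin.last t) := pow_pos hβ0 _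
  have hlast : a (Fin.last t) * H = c (Fin.last t) := div_mul_cancel₀ _ hH0.ne'
  have herror := sum_mul_pow_mul_div_sub_last a d H hβ0.ne'
  have hlt : |(∑ i, a i * β ^ d i) * H / β ^ d (Fin.last t) - c (Fin.last t)| < 1 / 2 := by
    rw [← hlast, herror, abs_div, abs_mul, abs_of_pos hH0, abs_of_pos hpow, div_lt_iff₀ hpow]
    linarith [abs_sum_mul_pow_castSucc_lt hd hbound hH0.le hβH]
  exact ⟨hlt, (Int.ceil_sub_half_eq_of_abs_sub_lt hlt).symm⟩
end

section
/- Let p be a good prime for f ∈ ℚ[x₁,…,xₙ] (i.e., the substitution xᵢ ↦ x^{(D+1)^{i−1} mod p} induces an injection on the monomials of f), where f has monomials with exponent vectors in {0,…,D}ⁿ and distinct primes q₁ < ⋯ < qₙ are given. Then in the polynomial g(x) = f(q₁x, q₂x^{(D+1) mod p}, …, qₙx^{(D+1)^{n−1} mod p}), each term has the form (cᵢ·q₁^{e_{i,1}}⋯qₙ^{e_{i,n}})·x^{dᵢ} with distinct exponents dᵢ, and the exponent vector (e_{i,1},…,e_{i,n}) is recoverable from the coefficient ratio (coefficient of x^{dᵢ}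 in g)/cᵢ = q₁^{e_{i,1}}⋯qₙ^{e_{i,n}} by unique factorization. -/
/-! Since the exponents `d i` are pairwise distinct, no two terms of `g` collide, so the coefficient
of `x ^ d i` is exactly `c i * ∏ j, q j ^ e i j`. The exponent vector is recovered from this product
by unique factorization: the multiplicity of the prime `q j` in it is `e i j`. -/

open Polynomial in
theorem Polynomial.coeff_sum_C_mul_X_pow_of_injective {R ι : Type*} [Semiring R] [Fintype ι]
    (a : ι → R) {d : ι → ℕ} (hd : Function.Injective d) (i : ι) :
    (∑ k, C (a k) * X ^ d k).coeff (d i) = a i := by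
  rw [finsetSum_coeff, Fintype.sum_eq_single i fun k hk => ?_]
  · simp
  · rw [coeff_C_mul_X_pow, if_neg (hd.ne hk).symm]

theorem Nat.factorization_prod_pow_primes {ι : Type*} [Fintype ι] {q : ι → ℕ}
    (hq : ∀ j, (q j).Prime) (hinj : Function.Injective q) (k : ι → ℕ) (j : ι) :
    (∏ j', q j' ^ k j').factorization (q j) = k j := by
  rw [Nat.factorization_prod fun j' _ => pow_ne_zero _ (hq j').ne_zero, Finset.sum_apply',
    Finset.sum_eq_single j]
  · simp [(hq j).factorization]
  · intro j' _ hj'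
    simp [(hq j').factorization, hinj.ne hj']
  · simp

theorem Nat.prod_pow_primes_injective {ι : Type*} [Fintype ι] {q : ι → ℕ}
    (hq : ∀ j, (q j).Prime) (hinj : Function.Injective q) :
    Function.Injective fun k : ι → ℕ => ∏ j, q j ^ k j := fun k k' h => funext fun j => by
  rw [← factorization_prod_pow_primes hq hinj k j, ← factorization_prod_pow_primes hq hinj k' j]
  exact congrArg (fun m => m.factorization (q j)) h

theorem stmt_18_general (n t : ℕ)
    (c : Fin t → ℚ) (hc : ∀ i, c i ≠ 0)
    (e : Fin t → Fin n → ℕ)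
    (q : Fin n → ℕ) (hq : ∀ j, (q j).Prime) (hqmono : StrictMono q)
    (d : Fin t → ℕ)
    (hgood : Function.Injective d)
    (g : Polynomial ℚ)
    (hg : g = ∑ i, Polynomial.C (c i * ∏ j, (q j : ℚ) ^ e i j) * Polynomial.X ^ d i) :
    (∀ i, g.coeff (d i) = c i * ∏ j, (q j : ℚ) ^ e i j) ∧
    (∀ i, g.coeff (d i) / c i = ∏ j, (q j : ℚ) ^ e i j) ∧
    (∀ i i' : Fin t, (∏ j, (q j : ℚ) ^ e i j) = (∏ j, (q j : ℚ) ^ e i' j) → e i = e i') := by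
  have hcoeff : ∀ i, g.coeff (d i) = c i * ∏ j, (q j : ℚ) ^ e i j := fun i => by
    rw [hg, Polynomial.coeff_sum_C_mul_X_pow_of_injective _ hgood]
  refine ⟨hcoeff, fun i => by rw [hcoeff i, mul_div_cancel_left₀ _ (hc i)], fun i i' h => ?_⟩
  apply Nat.prod_pow_primes_injective hq hqmono.injective
  exact_mod_cast h

theorem stmt_18 (n t D p : ℕ) (hp : p.Prime) (hD : 0 < D)
    (c : Fin t → ℚ) (hc : ∀ i, c i ≠ 0)
    (e : Fin t → Fin n → ℕ) (he : Function.Injective e) (heD : ∀ i j, e i j ≤ D)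
    (q : Fin n → ℕ) (hq : ∀ j, (q j).Prime) (hqmono : StrictMono q)
    (d : Fin t → ℕ) (hd : d = fun i => ∑ j, e i j * ((D + 1) ^ (j : ℕ) % p))
    (hgood : Function.Injective d)
    (g : Polynomial ℚ)
    (hg : g = ∑ i, Polynomial.C (c i * ∏ j, (q j : ℚ) ^ e i j) * Polynomial.X ^ d i) :
    (∀ i, g.coeff (d i) = c i * ∏ j, (q j : ℚ) ^ e i j) ∧
    (∀ i, g.coeff (d i) / c i = ∏ j, (q j : ℚ) ^ e i j) ∧
    (∀ i i' : Fin t, (∏ j, (q j : ℚ) ^ e i j) = (∏ j, (q j : ℚ) ^ e i' j) → e i = e i') :=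
  stmt_18_general n t c hc e q hq hqmono d hgood g hg
end
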